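/- arXiv:2104.04802 — 2 statements merged into one kernel-verified Lean document; each statement's English description precedes it below -/
import Mathlib

section
/- If a non-negative p×p random matrix A₁ almost surely has strictly positive diagonal entries and 𝔼A₁ is irreducible, then the i.i.d. sequence (Aₙ) of copies of A₁ is sequentially primitive. -/
open Matrix MeasureTheory ProbabilityTheory

instance matrixMeasurableSpace (m n : Type*) : MeasurableSpace (Matrix m n ℝ) :=
  (inferInstance : MeasurableSpace (m → n → ℝ))

/-- The backwards product `Mₙ = Aₙ Aₙ₋₁ ⋯ A₁` (indices starting at 1). -/
def prodRev (p : ℕ) (A : ℕ → Matrix (Fin p) (Fin p) ℝ) : ℕ → Matrix (Fin p) (Fin p) ℝ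
  | 0 => 1
  | n + 1 => A (n + 1) * prodRev p A n

/-- The natural filtration of the matrix process: `ℱₙ = σ(A₁,…,Aₙ)`. -/
def historyFiltration (p : ℕ) {Ω : Type*} [MeasurableSpace Ω]
    (A : ℕ → Ω → Matrix (Fin p) (Fin p) ℝ) (n : ℕ) : MeasurableSpace Ω :=
  MeasurableSpace.comap (fun ω => (fun i : Fin n => A (i.val + 1) ω)) inferInstance

/-- `τ : Ω → ℕ∞` is a stopping time for the process `(Aₙ)`. -/
def IsStoppingTimeFor (p : ℕ) {Ω : Type*} [MeasurableSpace Ω]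
    (A : ℕ → Ω → Matrix (Fin p) (Fin p) ℝ) (τ : Ω → ℕ∞) : Prop :=
  ∀ n : ℕ, MeasurableSet[historyFiltration p A n] {ω | τ ω = (n : ℕ∞)}

/-- Sequential primitivity: there is an a.s. finite stopping time `τ ≥ 1` such that
`A_τ A_{τ−1} ⋯ A₁` has all entries strictly positive almost surely. -/
def SeqPrimitive (p : ℕ) {Ω : Type*} [MeasurableSpace Ω] (μ : Measure Ω)
    (A : ℕ → Ω → Matrix (Fin p) (Fin p) ℝ) : Prop :=
  ∃ τ : Ω → ℕ∞, IsStoppingTimeFor p A τ ∧ (∀ᵐ ω ∂μ, 1 ≤ τ ω ∧ τ ω ≠ ⊤) ∧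
    ∀ᵐ ω ∂μ, ∀ i j, 0 < prodRev p (fun m => A m ω) (τ ω).toNat i j

/-- Irreducibility of a non-negative matrix. -/
def MatIrreducible (p : ℕ) (B : Matrix (Fin p) (Fin p) ℝ) : Prop :=
  ∀ i j, ∃ m, 1 ≤ m ∧ 0 < (B ^ m) i j

/-! ### Auxiliary deterministic lemmas -/

lemma mul_entry_pos {p : ℕ} {M N : Matrix (Fin p) (Fin p) ℝ}
    (hM : ∀ a b, 0 ≤ M a b) (hN : ∀ a b, 0 ≤ N a b) {i k j : Fin p}
    (h1 : 0 < M i k) (h2 : 0 < N k j) : 0 < (M * N) i j := by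
  rw [Matrix.mul_apply]
  exact Finset.sum_pos' (fun a _ => mul_nonneg (hM i a) (hN a j))
    ⟨k, Finset.mem_univ k, mul_pos h1 h2⟩

lemma mul_entry_nonneg {p : ℕ} {M N : Matrix (Fin p) (Fin p) ℝ}
    (hM : ∀ a b, 0 ≤ M a b) (hN : ∀ a b, 0 ≤ N a b) (i j : Fin p) :
    0 ≤ (M * N) i j := by
  rw [Matrix.mul_apply]
  exact Finset.sum_nonneg fun a _ => mul_nonneg (hM i a) (hN a j)

lemma prodRev_congr {p : ℕ} {A A' : ℕ → Matrix (Fin p) (Fin p) ℝ} :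
    ∀ n, (∀ m, 1 ≤ m → m ≤ n → A m = A' m) → prodRev p A n = prodRev p A' n
  | 0, _ => rfl
  | n + 1, h => by
      rw [prodRev, prodRev, h (n+1) (Nat.succ_le_succ (Nat.zero_le n)) le_rfl,
        prodRev_congr n fun m h1 h2 => h m h1 (h2.trans (Nat.le_succ n))]

lemma prodRev_nonneg {p : ℕ} {A : ℕ → Matrix (Fin p) (Fin p) ℝ}
    (hA : ∀ m, 1 ≤ m → ∀ i j, 0 ≤ A m i j) :
    ∀ n, ∀ i j, 0 ≤ prodRev p A n i j
  | 0, i, j => by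
      rw [prodRev, Matrix.one_apply]
      split <;> norm_num
  | n + 1, i, j =>
      mul_entry_nonneg (hA (n+1) (Nat.succ_le_succ (Nat.zero_le n)))
        (fun a b => prodRev_nonneg hA n a b) i j

lemma prodRev_diag_pos {p : ℕ} {A : ℕ → Matrix (Fin p) (Fin p) ℝ}
    (hA : ∀ m, 1 ≤ m → ∀ i j, 0 ≤ A m i j)
    (hAd : ∀ m, 1 ≤ m → ∀ i, 0 < A m i i) :
    ∀ n, ∀ i, 0 < prodRev p A n i i
  | 0, i => by rw [prodRev, Matrix.one_apply_eq]; norm_num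
  | n + 1, i =>
      mul_entry_pos (hA (n+1) (Nat.succ_le_succ (Nat.zero_le n)))
        (fun a b => prodRev_nonneg hA n a b)
        (hAd (n+1) (Nat.succ_le_succ (Nat.zero_le n)) i)
        (prodRev_diag_pos hA hAd n i)

lemma prodRev_entry_mono {p : ℕ} {A : ℕ → Matrix (Fin p) (Fin p) ℝ}
    (hA : ∀ m, 1 ≤ m → ∀ i j, 0 ≤ A m i j)
    (hAd : ∀ m, 1 ≤ m → ∀ i, 0 < A m i i)
    {i j : Fin p} {n : ℕ} (h : 0 < prodRev p A n i j) :
    ∀ n', n ≤ n' → 0 < prodRev p A n' i j := by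
  intro n' hn'
  induction n' , hn' using Nat.le_induction with
  | base => exact h
  | succ k hk ih =>
      exact mul_entry_pos (hA (k+1) (Nat.succ_le_succ (Nat.zero_le k)))
        (fun a b => prodRev_nonneg hA k a b)
        (hAd (k+1) (Nat.succ_le_succ (Nat.zero_le k)) i) ih

/-- climbing a path along a block of matrices -/
lemma prodRev_block_pos {p : ℕ} {A : ℕ → Matrix (Fin p) (Fin p) ℝ}
    (hA : ∀ m, 1 ≤ m → ∀ i j, 0 ≤ A m i j)
    (hAd : ∀ m, 1 ≤ m → ∀ i, 0 < A m i i)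
    (v : ℕ → Fin p) (m t : ℕ)
    (hB : ∀ k, k < m → 0 < A (t * m + k + 1) (v (m - 1 - k)) (v (m - k))) :
    0 < prodRev p A (t * m + m) (v 0) (v m) := by
  have key : ∀ k, k ≤ m → 0 < prodRev p A (t * m + k) (v (m - k)) (v m) := by
    intro k hk
    induction k with
    | zero => simpa using prodRev_diag_pos hA hAd (t * m) (v m)
    | succ k ih =>
        have hk' : k < m := hk
        have hrec := ih (Nat.le_of_lt hk')
        have hstep := hB k hk'
        have : prodRev p A (t * m + (k+1)) = A (t * m + k + 1) * prodRev p A (t * m + k) := by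
          rw [← Nat.add_assoc]; rfl
        rw [this]
        have hmk : m - (k+1) = m - 1 - k := by omega
        rw [hmk]
        exact mul_entry_pos (hA (t*m+k+1) (Nat.succ_le_succ (Nat.zero_le _)))
          (fun a b => prodRev_nonneg hA (t*m+k) a b) hstep hrec
  simpa using key m le_rfl

lemma pow_entry_nonneg {p : ℕ} {B : Matrix (Fin p) (Fin p) ℝ}
    (hB : ∀ a b, 0 ≤ B a b) : ∀ m, ∀ i j, 0 ≤ (B ^ m) i j
  | 0, i, j => by rw [pow_zero, Matrix.one_apply]; split <;> norm_num
  | m + 1, i, j => by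
      rw [pow_succ]
      exact mul_entry_nonneg (fun a b => pow_entry_nonneg hB m a b) hB i j

/-- extracting a positive path from a positive power entry -/
lemma exists_path {p : ℕ} {B : Matrix (Fin p) (Fin p) ℝ} (hB : ∀ a b, 0 ≤ B a b) :
    ∀ m, 1 ≤ m → ∀ i j : Fin p, 0 < (B ^ m) i j →
      ∃ v : ℕ → Fin p, v 0 = i ∧ v m = j ∧ ∀ k, k < m → 0 < B (v k) (v (k + 1)) := by
  intro m hm
  induction m, hm using Nat.le_induction with
  | base =>
      intro i j h
      rw [pow_one] at h
      exact ⟨fun k => if k = 0 then i else j, by simp, by simp, by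
        intro k hk
        interval_cases k
        simpa using h⟩
  | succ m hm ih =>
      intro i j h
      rw [pow_succ'] at h
      rw [Matrix.mul_apply] at h
      have : ∃ k : Fin p, 0 < B i k * (B ^ m) k j := by
        by_contra hc
        push_neg at hc
        exact absurd (Finset.sum_nonpos fun a _ => hc a) (not_le.mpr h)
      obtain ⟨k, hk⟩ := this
      have h1 : 0 < B i k := by
        rcases (hB i k).lt_or_eq with h' | h'
        · exact h'
        · exfalso; rw [← h'] at hk; simp at hk
      have h2 : 0 < (B ^ m) k j := by
        rcases (pow_entry_nonneg hB m k j).lt_or_eq with h' | h'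
        · exact h'
        · exfalso; rw [← h'] at hk; simp at hk
      obtain ⟨v, hv0, hvm, hve⟩ := ih k j h2
      refine ⟨fun n => if n = 0 then i else v (n - 1), by simp, by simp [hvm], ?_⟩
      intro l hl
      rcases Nat.eq_zero_or_pos l with rfl | hl0
      · simpa [hv0] using h1
      · have hne : l ≠ 0 := hl0.ne'
        have h1l : l - 1 < m := by omega
        have hve' := hve (l - 1) h1l
        have e : l - 1 + 1 = l := by omega
        rw [e] at hve'
        have e2 : l + 1 - 1 = l := by omega
        simp only [hne, if_false, Nat.add_one_ne_zero, e2]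
        exact hve'

/-! ### Measurability helpers -/

lemma measurable_matrix_entry {q r : Type*} [Fintype q] [Fintype r] (a : q) (b : r) :
    Measurable fun M : Matrix q r ℝ => M a b :=
  (measurable_pi_apply b).comp (measurable_pi_apply a)

/-- extension of a finite vector of matrices to a sequence -/
def extSeq (p n : ℕ) (x : Fin n → Matrix (Fin p) (Fin p) ℝ) : ℕ → Matrix (Fin p) (Fin p) ℝ :=
  fun l => if h : l - 1 < n then x ⟨l - 1, h⟩ else 1

lemma measurable_prodRev_extSeq (p n : ℕ) : ∀ (k : ℕ) (i j : Fin p),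
    Measurable fun x : Fin n → Matrix (Fin p) (Fin p) ℝ => prodRev p (extSeq p n x) k i j
  | 0, i, j => by
      simp only [prodRev]
      exact measurable_const
  | k+1, i, j => by
      have h : (fun x : Fin n → Matrix (Fin p) (Fin p) ℝ => prodRev p (extSeq p n x) (k+1) i j)
          = fun x => ∑ l, extSeq p n x (k+1) i l * prodRev p (extSeq p n x) k l j := by
        funext x; rw [prodRev, Matrix.mul_apply]
      rw [h]
      refine Finset.measurable_sum _ fun l _ => Measurable.mul ?_
        (measurable_prodRev_extSeq p n k l j)
      by_cases h' : (k+1) - 1 < n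
      · have : (fun x : Fin n → Matrix (Fin p) (Fin p) ℝ => extSeq p n x (k+1) i l)
            = fun x => x ⟨(k+1)-1, h'⟩ i l := by
          funext x; simp only [extSeq, dif_pos h']
        rw [this]
        exact (measurable_matrix_entry i l).comp (measurable_pi_apply _)
      · have : (fun x : Fin n → Matrix (Fin p) (Fin p) ℝ => extSeq p n x (k+1) i l)
            = fun _ => (1 : Matrix (Fin p) (Fin p) ℝ) i l := by
          funext x; simp only [extSeq, dif_neg h']
        rw [this]
        exact measurable_const

lemma extSeq_prodRev_eq {p : ℕ} {Ω : Type*} (A : ℕ → Ω → Matrix (Fin p) (Fin p) ℝ)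
    (n : ℕ) (ω : Ω) {k : ℕ} (hk : k ≤ n) :
    prodRev p (extSeq p n (fun i : Fin n => A (i.val + 1) ω)) k
      = prodRev p (fun m => A m ω) k := by
  refine prodRev_congr k fun l h1 h2 => ?_
  have hl : l - 1 < n := by omega
  simp only [extSeq, dif_pos hl]
  show A (l - 1 + 1) ω = A l ω
  have : l - 1 + 1 = l := by omega
  rw [this]

/-- positive integral of a nonnegative function gives positive measure to the
positivity set -/
lemma meas_pos_of_integral_pos {Ω : Type*} [MeasurableSpace Ω] {μ : Measure Ω}
    {f : Ω → ℝ} (hfi : Integrable f μ) (hf : 0 ≤ᵐ[μ] f) (h : 0 < ∫ ω, f ω ∂μ) :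
    μ {ω | 0 < f ω} ≠ 0 := by
  intro h0
  have h1 : ∀ᵐ ω ∂μ, ω ∉ {ω | 0 < f ω} := measure_eq_zero_iff_ae_notMem.mp h0
  have h2 : f =ᵐ[μ] 0 := by
    filter_upwards [hf, h1] with ω hω h1ω
    simp only [Set.mem_setOf_eq, not_lt] at h1ω
    exact le_antisymm h1ω hω
  rw [integral_congr_ae h2] at h
  simp at h

/-! ### The key probabilistic lemma: a path block eventually occurs -/

lemma pair_eventually (p : ℕ) {Ω : Type*} [MeasurableSpace Ω]
    (μ : Measure Ω) [IsProbabilityMeasure μ]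
    (A : ℕ → Ω → Matrix (Fin p) (Fin p) ℝ) (hmeas : ∀ n, Measurable (A n))
    (hiid : iIndepFun (fun n : ℕ => A (n + 1)) μ)
    (hid : ∀ n, 1 ≤ n → IdentDistrib (A n) (A 1) μ μ)
    (m : ℕ) (hm : 1 ≤ m) (v : ℕ → Fin p)
    (hr : ∀ k, k < m → μ {ω | 0 < A 1 ω (v (m - 1 - k)) (v (m - k))} ≠ 0) :
    ∀ᵐ ω ∂μ, ∃ t, ∀ k, k < m → 0 < A (t * m + k + 1) ω (v (m - 1 - k)) (v (m - k)) := by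
  classical
  set S : ℕ → Set (Matrix (Fin p) (Fin p) ℝ) :=
    fun k => {M | 0 < M (v (m - 1 - k)) (v (m - k))} with hS
  have hSmeas : ∀ k, MeasurableSet (S k) :=
    fun k => measurableSet_lt measurable_const (measurable_matrix_entry _ _)
  set sets : ℕ → Set (Matrix (Fin p) (Fin p) ℝ) := fun n => S (n % m) with hsets
  have hsetsmeas : ∀ n, MeasurableSet (sets n) := fun n => hSmeas _
  set block : ℕ → Finset ℕ := fun t => (Finset.range m).image (fun k => t * m + k) with hblock
  set B : ℕ → Set Ω := fun t => ⋂ n ∈ block t, A (n + 1) ⁻¹' sets n with hB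
  have hBmeas : ∀ t, MeasurableSet (B t) := fun t =>
    Finset.measurableSet_biInter _ fun n _ => (hmeas (n + 1)) (hsetsmeas n)
  have key : ∀ F : Finset ℕ,
      μ (⋂ n ∈ F, A (n + 1) ⁻¹' sets n) = ∏ n ∈ F, μ (A (n + 1) ⁻¹' sets n) :=
    fun F => hiid.measure_inter_preimage_eq_mul F (fun n _ => hsetsmeas n)
  have hident : ∀ n, μ (A (n + 1) ⁻¹' sets n) = μ (A 1 ⁻¹' sets n) :=
    fun n => (hid (n + 1) (Nat.succ_le_succ (Nat.zero_le n))).measure_mem_eq (hsetsmeas n)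
  have hmod : ∀ t k, k < m → (t * m + k) % m = k := by
    intro t k hk
    rw [Nat.mul_comm, Nat.mul_add_mod, Nat.mod_eq_of_lt hk]
  set q : ENNReal := ∏ k ∈ Finset.range m, μ (A 1 ⁻¹' S k) with hqdef
  have hμB : ∀ t, μ (B t) = q := by
    intro t
    rw [hB]
    rw [key (block t), hblock]
    rw [Finset.prod_image (by intro a _ b _ h; simp only at h; omega)]
    refine Finset.prod_congr rfl fun k hk => ?_
    rw [hident]
    congr 1
    simp only [hsets]
    rw [hmod t k (Finset.mem_range.mp hk)]
  have hq0 : q ≠ 0 := by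
    rw [hqdef, ← pos_iff_ne_zero, CanonicallyOrderedAdd.prod_pos]
    intro k hk
    rw [pos_iff_ne_zero]
    exact hr k (Finset.mem_range.mp hk)
  have hdiv : ∀ t k, k < m → (t * m + k) / m = t := by
    intro t k hk
    rw [Nat.add_comm, Nat.add_mul_div_right _ _ (Nat.lt_of_lt_of_le (Nat.zero_lt_one) hm),
      Nat.div_eq_of_lt hk, Nat.zero_add]
  have hblockdisj : ∀ s t : ℕ, s ≠ t → Disjoint (block s) (block t) := by
    intro s t hst
    rw [Finset.disjoint_left]
    intro n hns hnt
    rw [hblock, Finset.mem_image] at hns hnt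
    obtain ⟨k1, hk1, rfl⟩ := hns
    obtain ⟨k2, hk2, he⟩ := hnt
    apply hst
    rw [← hdiv s k1 (Finset.mem_range.mp hk1), ← he, hdiv t k2 (Finset.mem_range.mp hk2)]
  have hInterProd : ∀ F : Finset ℕ, μ (⋂ t ∈ F, B t) = ∏ t ∈ F, μ (B t) := by
    intro F
    have he : ⋂ t ∈ F, B t = ⋂ n ∈ F.biUnion block, A (n + 1) ⁻¹' sets n :=
      (Finset.set_biInter_biUnion F block _).symm
    rw [he, key, Finset.prod_biUnion]
    · exact Finset.prod_congr rfl fun t _ => (key (block t)).symm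
    · intro s hs t ht hst
      exact hblockdisj s t hst
  have hiIndepSet : iIndepSet B μ := by
    rw [iIndepSet_iff_iIndep]
    refine iIndepSets.iIndep (m := fun t => MeasurableSpace.generateFrom {B t})
      (fun t => MeasurableSpace.generateFrom_le ?_) (fun t => {B t})
      (fun t => IsPiSystem.singleton _) (fun t => rfl) ?_
    · intro s hs
      rw [Set.mem_singleton_iff] at hs
      rw [hs]
      exact hBmeas t
    · rw [iIndepSets_iff]
      intro F f hf
      have hfB : ∀ t ∈ F, f t = B t := fun t ht => hf t ht
      have h1 : ⋂ t ∈ F, f t = ⋂ t ∈ F, B t := by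
        apply Set.iInter₂_congr
        intro t ht
        exact hfB t ht
      rw [h1, hInterProd]
      exact Finset.prod_congr rfl fun t ht => by rw [hfB t ht]
  have hsum : (∑' t, μ (B t)) = ⊤ := by
    rw [tsum_congr hμB]
    exact ENNReal.tsum_const_eq_top_of_ne_zero hq0
  have hone : μ (Filter.limsup B Filter.atTop) = 1 :=
    measure_limsup_eq_one hBmeas hiIndepSet hsum
  have hlim : MeasurableSet (Filter.limsup B Filter.atTop) := by
    rw [Filter.limsup_eq_iInf_iSup_of_nat]
    simp only [Set.iInf_eq_iInter, Set.iSup_eq_iUnion]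
    exact MeasurableSet.iInter fun n =>
      MeasurableSet.iUnion fun i => MeasurableSet.iUnion fun _ => hBmeas i
  have hc : μ (Filter.limsup B Filter.atTop)ᶜ = 0 := by
    rw [measure_compl hlim (measure_ne_top μ _), hone, measure_univ, tsub_self]
  have hae : ∀ᵐ ω ∂μ, ω ∈ Filter.limsup B Filter.atTop := by
    rw [ae_iff]
    exact hc
  filter_upwards [hae] with ω hω
  obtain ⟨t, ht⟩ := (Filter.mem_limsup_iff_frequently_mem.mp hω).exists
  refine ⟨t, fun k hk => ?_⟩
  have hn : t * m + k ∈ block t := by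
    rw [hblock]
    exact Finset.mem_image.mpr ⟨k, Finset.mem_range.mpr hk, rfl⟩
  rw [hB] at ht
  have hmem : ω ∈ A (t * m + k + 1) ⁻¹' sets (t * m + k) := by
    exact Set.mem_iInter₂.mp ht _ hn
  rw [Set.mem_preimage] at hmem
  simp only [hsets] at hmem
  rw [hmod t k hk] at hmem
  exact hmem

/-- If a non-negative random matrix `A₁` a.s. has strictly positive diagonal and `𝔼A₁`
is irreducible, then the i.i.d. sequence `(Aₙ)` of copies of `A₁` is sequentially
primitive. -/
theorem stmt6 (p : ℕ) (hp : 0 < p) {Ω : Type*} [MeasurableSpace Ω]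
    (μ : Measure Ω) [IsProbabilityMeasure μ]
    (A : ℕ → Ω → Matrix (Fin p) (Fin p) ℝ)
    (hmeas : ∀ n, Measurable (A n))
    (hnn : ∀ n, ∀ᵐ ω ∂μ, ∀ i j, 0 ≤ A n ω i j)
    (hint : ∀ i j, Integrable (fun ω => A 1 ω i j) μ)
    (hiid : iIndepFun (fun n : ℕ => A (n + 1)) μ)
    (hid : ∀ n, 1 ≤ n → IdentDistrib (A n) (A 1) μ μ)
    (hdiag : ∀ᵐ ω ∂μ, ∀ i, 0 < A 1 ω i i)
    (hirr : MatIrreducible p (Matrix.of fun i j => ∫ ω, A 1 ω i j ∂μ)) :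
    SeqPrimitive p μ A := by
  classical
  set I : Matrix (Fin p) (Fin p) ℝ := Matrix.of fun i j => ∫ ω, A 1 ω i j ∂μ with hI
  have hInn : ∀ a b, 0 ≤ I a b := fun a b =>
    integral_nonneg_of_ae ((hnn 1).mono fun ω h => h a b)
  -- a.e. regularity of all the matrices
  have hnnall : ∀ᵐ ω ∂μ, ∀ l, ∀ i j, 0 ≤ A l ω i j := ae_all_iff.mpr hnn
  have hdall : ∀ᵐ ω ∂μ, ∀ l, 1 ≤ l → ∀ i, 0 < A l ω i i := by
    rw [ae_all_iff]
    intro l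
    rcases Nat.eq_zero_or_pos l with rfl | hl
    · exact Filter.Eventually.of_forall fun ω h => absurd h (by omega)
    · set s : Set (Matrix (Fin p) (Fin p) ℝ) := {M | ∀ i, 0 < M i i} with hs
      have hseq : s = ⋂ i, {M : Matrix (Fin p) (Fin p) ℝ | 0 < M i i} := by
        ext M; simp [hs]
      have hsm : MeasurableSet s := by
        rw [hseq]
        exact MeasurableSet.iInter fun i =>
          measurableSet_lt measurable_const (measurable_matrix_entry i i)
      have h1 : μ (A 1 ⁻¹' sᶜ) = 0 := by
        have h := hdiag
        rw [ae_iff] at h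
        exact h
      have h2 : μ (A l ⁻¹' sᶜ) = 0 := by
        rw [(hid l hl).measure_mem_eq hsm.compl]
        exact h1
      have h3 : ∀ᵐ ω ∂μ, A l ω ∈ s := by
        rw [ae_iff]
        exact h2
      exact h3.mono fun ω h _ => h
  -- for each pair of indices, a.s. the product eventually has positive entry there
  have hpair : ∀ c : Fin p × Fin p, ∀ᵐ ω ∂μ,
      ∃ n, 1 ≤ n ∧ 0 < prodRev p (fun l => A l ω) n c.1 c.2 := by
    intro c
    obtain ⟨m, hm, hpow⟩ := hirr c.1 c.2
    obtain ⟨v, hv0, hvm, hve⟩ := exists_path hInn m hm c.1 c.2 hpow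
    have hr : ∀ k, k < m → μ {ω | 0 < A 1 ω (v (m - 1 - k)) (v (m - k))} ≠ 0 := by
      intro k hk
      have h1 : m - 1 - k < m := by omega
      have h2 : m - 1 - k + 1 = m - k := by omega
      have h3 := hve (m - 1 - k) h1
      rw [h2] at h3
      exact meas_pos_of_integral_pos (hint _ _) ((hnn 1).mono fun ω h => h _ _) h3
    have hblocks := pair_eventually p μ A hmeas hiid hid m hm v hr
    filter_upwards [hblocks, hnnall, hdall] with ω hωb hωn hωd
    obtain ⟨t, ht⟩ := hωb
    refine ⟨t * m + m, by omega, ?_⟩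
    have hpos := prodRev_block_pos (A := fun l => A l ω)
      (fun l _ i j => hωn l i j) hωd v m t ht
    rw [hv0, hvm] at hpos
    exact hpos
  -- a.s. the product is eventually entrywise positive
  have hP : ∀ᵐ ω ∂μ, ∃ n, 1 ≤ n ∧ ∀ i j, 0 < prodRev p (fun l => A l ω) n i j := by
    have hall : ∀ᵐ ω ∂μ, ∀ c : Fin p × Fin p,
        ∃ n, 1 ≤ n ∧ 0 < prodRev p (fun l => A l ω) n c.1 c.2 := ae_all_iff.mpr hpair
    filter_upwards [hall, hnnall, hdall] with ω hc hωn hωd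
    choose nn hnn1 hnnpos using hc
    set N := Finset.univ.sup nn with hN
    have hN1 : 1 ≤ N :=
      le_trans (hnn1 (⟨0, hp⟩, ⟨0, hp⟩)) (Finset.le_sup (Finset.mem_univ _))
    refine ⟨N, hN1, fun i j => ?_⟩
    exact prodRev_entry_mono (fun l _ a b => hωn l a b) hωd (hnnpos (i, j)) N
      (Finset.le_sup (Finset.mem_univ _))
  set R : ℕ → Ω → Prop := fun k ω => 1 ≤ k ∧ ∀ i j, 0 < prodRev p (fun l => A l ω) k i j
    with hR
  set τ : Ω → ℕ∞ := fun ω => if h : ∃ k, R k ω then ((Nat.find h : ℕ) : ℕ∞) else ⊤ with hτ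
  have hPR : ∀ᵐ ω ∂μ, ∃ k, R k ω := hP
  refine ⟨τ, ?_, ?_, ?_⟩
  · -- stopping time
    intro n
    set Q' : ℕ → (Fin n → Matrix (Fin p) (Fin p) ℝ) → Prop :=
      fun k x => 1 ≤ k ∧ ∀ i j, 0 < prodRev p (extSeq p n x) k i j with hQ'
    set T : Set (Fin n → Matrix (Fin p) (Fin p) ℝ) :=
      {x | Q' n x ∧ ∀ k, k < n → ¬ Q' k x} with hT
    have hQm : ∀ k, MeasurableSet {x | Q' k x} := by
      intro k
      by_cases h1k : 1 ≤ k
      · have he : {x | Q' k x} = ⋂ i, ⋂ j,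
            {x : Fin n → Matrix (Fin p) (Fin p) ℝ | 0 < prodRev p (extSeq p n x) k i j} := by
          ext x; simp [hQ', h1k]
        rw [he]
        exact MeasurableSet.iInter fun i => MeasurableSet.iInter fun j =>
          measurableSet_lt measurable_const (measurable_prodRev_extSeq p n k i j)
      · have he : {x | Q' k x} = ∅ := by
          ext x; simp [hQ', h1k]
        rw [he]
        exact MeasurableSet.empty
    have hTm : MeasurableSet T := by
      have he : T = {x | Q' n x} ∩ ⋂ k, ⋂ (_ : k < n), {x | Q' k x}ᶜ := by
        ext x; simp [hT]
      rw [he]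
      exact (hQm n).inter (MeasurableSet.iInter fun k =>
        MeasurableSet.iInter fun _ => (hQm k).compl)
    refine MeasurableSpace.measurableSet_comap.mpr ⟨T, hTm, ?_⟩
    ext ω
    set x : Fin n → Matrix (Fin p) (Fin p) ℝ := fun i => A (i.val + 1) ω with hx
    have hQx : ∀ k, k ≤ n → (Q' k x ↔ R k ω) := by
      intro k hk
      rw [hQ', hR]
      simp only
      constructor
      · rintro ⟨h1, h2⟩
        refine ⟨h1, fun i j => ?_⟩
        have := h2 i j
        rwa [extSeq_prodRev_eq A n ω hk] at this
      · rintro ⟨h1, h2⟩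
        refine ⟨h1, fun i j => ?_⟩
        have := h2 i j
        rwa [← extSeq_prodRev_eq A n ω hk] at this
    constructor
    · intro hmem
      rw [Set.mem_preimage] at hmem
      rw [hT] at hmem
      obtain ⟨hQn, hQlt⟩ := hmem
      have hRn : R n ω := (hQx n le_rfl).mp hQn
      have hex : ∃ k, R k ω := ⟨n, hRn⟩
      have hfind : Nat.find hex = n := by
        rw [Nat.find_eq_iff]
        exact ⟨hRn, fun k hk => fun hc => hQlt k hk ((hQx k (Nat.le_of_lt hk)).mpr hc)⟩
      show τ ω = (n : ℕ∞)
      rw [hτ]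
      simp only [dif_pos hex, hfind]
    · intro hmem
      have hτn : τ ω = (n : ℕ∞) := hmem
      rw [hτ] at hτn
      simp only at hτn
      by_cases hex : ∃ k, R k ω
      · rw [dif_pos hex] at hτn
        have hfind : Nat.find hex = n := by exact_mod_cast hτn
        rw [Nat.find_eq_iff] at hfind
        rw [Set.mem_preimage, hT]
        exact ⟨(hQx n le_rfl).mpr hfind.1,
          fun k hk hc => hfind.2 k hk ((hQx k (Nat.le_of_lt hk)).mp hc)⟩
      · rw [dif_neg hex] at hτn
        exact absurd hτn.symm (ENat.coe_ne_top n)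
  · filter_upwards [hPR] with ω h
    have hτω : τ ω = ((Nat.find h : ℕ) : ℕ∞) := by rw [hτ]; simp only [dif_pos h]
    constructor
    · rw [hτω]
      exact_mod_cast (Nat.find_spec h).1
    · rw [hτω]
      exact ENat.coe_ne_top _
  · filter_upwards [hPR] with ω h
    intro i j
    have hτω : τ ω = ((Nat.find h : ℕ) : ℕ∞) := by rw [hτ]; simp only [dif_pos h]
    rw [hτω, ENat.toNat_coe]
    exact (Nat.find_spec h).2 i j
end

section
/- Define η_{2k} = log ρ(𝔼(B₁^{⊗2k})) for a random square matrix B₁ with appropriate integrability, and set η₀ = 0. Then the sequence k ↦ η_{2k} is mid-point convex: η_{2k} ≤ (η_{2k−2} + η_{2k+2})/2 for all k ≥ 1, and consequently η_{2k}/(2k) is non-decreasing in k ≥ 1. -/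
open Matrix MeasureTheory Filter
open scoped NNReal ENNReal

/-- The `k`-fold Kronecker (tensor) power of a `p×p` matrix, as a matrix indexed by
`Fin k → Fin p`. -/
def tpow (p k : ℕ) (A : Matrix (Fin p) (Fin p) ℝ) :
    Matrix (Fin k → Fin p) (Fin k → Fin p) ℝ :=
  Matrix.of fun f g => ∏ i, A (f i) (g i)

/-- The spectral radius of a real square matrix (over the complex spectrum). -/
noncomputable def specRad {m : Type*} [Fintype m] [DecidableEq m]
    (B : Matrix m m ℝ) : ℝ :=
  (spectralRadius ℂ (B.map (algebraMap ℝ ℂ))).toReal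

/-- The entrywise expectation `𝔼(B₁^{⊗m})` of the `m`-fold tensor power. -/
noncomputable def expTpow (p : ℕ) {Ω : Type*} [MeasurableSpace Ω] (μ : Measure Ω)
    (B : Ω → Matrix (Fin p) (Fin p) ℝ) (m : ℕ) :
    Matrix (Fin m → Fin p) (Fin m → Fin p) ℝ :=
  Matrix.of fun f g => ∫ ω, tpow p m (B ω) f g ∂μ

/-- `η_{2k} = log ρ(𝔼(B₁^{⊗2k}))`, indexed by `k` (so `η 0 = 0`). -/
noncomputable def eta (p : ℕ) {Ω : Type*} [MeasurableSpace Ω] (μ : Measure Ω)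
    (B : Ω → Matrix (Fin p) (Fin p) ℝ) (k : ℕ) : ℝ :=
  Real.log (specRad (expTpow p μ B (2 * k)))


lemma tpow_one (p m : ℕ) : tpow p m 1 = 1 := by
  ext f g
  simp only [tpow, Matrix.of_apply, Matrix.one_apply]
  by_cases h : f = g
  · subst h; simp
  · rw [if_neg h]
    obtain ⟨i, hi⟩ : ∃ i, f i ≠ g i := by
      by_contra hc; push_neg at hc; exact h (funext hc)
    exact Finset.prod_eq_zero (Finset.mem_univ i) (by simp [Matrix.one_apply, hi])

lemma tpow_mul (p m : ℕ) (A A' : Matrix (Fin p) (Fin p) ℝ) :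
    tpow p m (A * A') = tpow p m A * tpow p m A' := by
  ext f g
  simp only [tpow, Matrix.of_apply, Matrix.mul_apply]
  rw [Finset.prod_univ_sum, Fintype.piFinset_univ]
  exact Finset.sum_congr rfl fun x _ => Finset.prod_mul_distrib

lemma tpow_append (p a b : ℕ) (A : Matrix (Fin p) (Fin p) ℝ)
    (f₁ g₁ : Fin a → Fin p) (f₂ g₂ : Fin b → Fin p) :
    tpow p (a + b) A (Fin.append f₁ f₂) (Fin.append g₁ g₂)
      = tpow p a A f₁ g₁ * tpow p b A f₂ g₂ := by
  simp only [tpow, Matrix.of_apply]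
  rw [Fin.prod_univ_add]
  simp [Fin.append_left, Fin.append_right]

lemma tpow_split (p a b : ℕ) (A : Matrix (Fin p) (Fin p) ℝ)
    (f g : Fin (a + b) → Fin p) :
    tpow p (a + b) A f g
      = tpow p a A (f ∘ Fin.castAdd b) (g ∘ Fin.castAdd b)
        * tpow p b A (f ∘ Fin.natAdd a) (g ∘ Fin.natAdd a) := by
  simp only [tpow, Matrix.of_apply]
  rw [Fin.prod_univ_add]
  rfl

lemma tpow_sq (p a : ℕ) (A : Matrix (Fin p) (Fin p) ℝ) (f g : Fin a → Fin p) :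
    tpow p a A f g ^ 2 = tpow p (a + a) A (Fin.append f f) (Fin.append g g) := by
  rw [tpow_append, sq]

section PS

variable {Ω : Type*}

universe upspace

def PSpace (Ω : Type upspace) : ℕ → Type upspace
  | 0 => PUnit
  | n + 1 => Ω × PSpace Ω n

instance PSpace.measurableSpace [MeasurableSpace Ω] : ∀ n, MeasurableSpace (PSpace Ω n)
  | 0 => (inferInstance : MeasurableSpace PUnit)
  | n + 1 => @Prod.instMeasurableSpace _ _ _ (PSpace.measurableSpace n)

noncomputable def PMeas [MeasurableSpace Ω] (μ : Measure Ω) : ∀ n, Measure (PSpace Ω n)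
  | 0 => Measure.dirac PUnit.unit
  | n + 1 => μ.prod (PMeas μ n)

instance PMeas.isProbabilityMeasure [MeasurableSpace Ω] (μ : Measure Ω)
    [IsProbabilityMeasure μ] : ∀ n, IsProbabilityMeasure (PMeas μ n)
  | 0 => by
    rw [show PMeas μ 0 = Measure.dirac PUnit.unit from rfl]; exact Measure.dirac.isProbabilityMeasure
  | n + 1 => by
    haveI := PMeas.isProbabilityMeasure μ n
    rw [show PMeas μ (n+1) = μ.prod (PMeas μ n) from rfl]
    exact Measure.prod.instIsProbabilityMeasure μ (PMeas μ n)

def CProd {p : ℕ} (B : Ω → Matrix (Fin p) (Fin p) ℝ) : ∀ n, PSpace Ω n → Matrix (Fin p) (Fin p) ℝ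
  | 0, _ => 1
  | n + 1, z => B z.1 * CProd B n z.2

variable [MeasurableSpace Ω] {p : ℕ} {μ : Measure Ω} {B : Ω → Matrix (Fin p) (Fin p) ℝ}

lemma measurable_CProd (hmeas : Measurable B) :
    ∀ n, Measurable (CProd B n)
  | 0 => measurable_const
  | n + 1 => by
    have ih := measurable_CProd hmeas n
    show Measurable (fun z : Ω × PSpace Ω n => B z.1 * CProd B n z.2)
    apply measurable_pi_lambda
    intro i
    apply measurable_pi_lambda
    intro j
    simp only [Matrix.mul_apply]
    apply Finset.measurable_sum
    intro k _
    exact ((hmeas.comp measurable_fst).eval.eval).mul ((ih.comp measurable_snd).eval.eval)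

lemma measurable_tpow_CProd (hmeas : Measurable B) (n m : ℕ)
    (f g : Fin m → Fin p) :
    Measurable (fun t => tpow p m (CProd B n t) f g) := by
  simp only [tpow, Matrix.of_apply]
  apply Finset.measurable_prod
  intro i _
  exact (measurable_pi_apply (g i)).comp ((measurable_pi_apply (f i)).comp
    (measurable_CProd hmeas n))

lemma integrable_tpow_CProd [IsProbabilityMeasure μ] (hmeas : Measurable B)
    (hint : ∀ m f g, Integrable (fun ω => tpow p m (B ω) f g) μ) :
    ∀ n, ∀ m, ∀ f g : Fin m → Fin p,
      Integrable (fun t => tpow p m (CProd B n t) f g) (PMeas μ n)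
  | 0 => fun m f g =>
    (integrable_const (μ := PMeas μ 0) (tpow p m (1 : Matrix (Fin p) (Fin p) ℝ) f g)).congr
      (by filter_upwards with t; rfl)
  | n + 1 => by
    intro m f g
    have ih := integrable_tpow_CProd hmeas hint n
    show Integrable (fun t : Ω × PSpace Ω n => tpow p m (B t.1 * CProd B n t.2) f g)
      (μ.prod (PMeas μ n))
    have : (fun t : Ω × PSpace Ω n => tpow p m (B t.1 * CProd B n t.2) f g)
        = fun t => ∑ h : Fin m → Fin p,
            tpow p m (B t.1) f h * tpow p m (CProd B n t.2) h g := by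
      funext t
      rw [tpow_mul]
      rfl
    rw [this]
    exact integrable_finset_sum _ fun h _ => (hint m f h).mul_prod (ih m h g)

lemma pow_expTpow_entry [IsProbabilityMeasure μ] (hmeas : Measurable B)
    (hint : ∀ m f g, Integrable (fun ω => tpow p m (B ω) f g) μ) :
    ∀ n, ∀ m, ∀ f g : Fin m → Fin p,
      ((expTpow p μ B m) ^ n) f g = ∫ t, tpow p m (CProd B n t) f g ∂(PMeas μ n)
  | 0 => by
    intro m f g
    simp only [pow_zero]
    rw [show (CProd B 0 : PSpace Ω 0 → _) = fun _ => 1 from rfl]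
    simp [tpow_one, integral_const, measure_univ]
  | n + 1 => by
    intro m f g
    have ih := pow_expTpow_entry hmeas hint n
    rw [pow_succ']  -- A^(n+1) = A * A^n
    rw [Matrix.mul_apply]
    have step1 : ∀ h, expTpow p μ B m f h * ((expTpow p μ B m) ^ n) h g
        = ∫ z : Ω × PSpace Ω n,
            tpow p m (B z.1) f h * tpow p m (CProd B n z.2) h g ∂(μ.prod (PMeas μ n)) := by
      intro h
      rw [ih m h g, show expTpow p μ B m f h = ∫ ω, tpow p m (B ω) f h ∂μ from rfl,
        ← integral_prod_mul]
    rw [Finset.sum_congr rfl fun h _ => step1 h]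
    rw [← integral_finset_sum _ fun h _ => (hint m f h).mul_prod
      (integrable_tpow_CProd hmeas hint n m h g)]
    rw [show PMeas μ (n+1) = μ.prod (PMeas μ n) from rfl]
    apply integral_congr_ae
    filter_upwards with z
    show ∑ h, _ = tpow p m (B z.1 * CProd B n z.2) f g
    rw [tpow_mul]
    rfl

end PS

lemma abs_integral_mul_le {α : Type*} [MeasurableSpace α] (ν : Measure α)
    (f g : α → ℝ) (hf : AEStronglyMeasurable f ν) (hg : AEStronglyMeasurable g ν)
    (hf2 : Integrable (fun a => f a ^ 2) ν) (hg2 : Integrable (fun a => g a ^ 2) ν)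
    (hfg : Integrable (fun a => f a * g a) ν) :
    |∫ a, f a * g a ∂ν| ≤ Real.sqrt (∫ a, f a ^ 2 ∂ν) * Real.sqrt (∫ a, g a ^ 2 ∂ν) := by
  have hpq : Real.HolderConjugate 2 2 := Real.holderConjugate_iff.mpr ⟨one_lt_two, by norm_num⟩
  have hmf : MemLp f (ENNReal.ofReal 2) ν := by
    rw [show ENNReal.ofReal 2 = 2 by norm_num]
    exact (memLp_two_iff_integrable_sq hf).2 hf2
  have hmg : MemLp g (ENNReal.ofReal 2) ν := by
    rw [show ENNReal.ofReal 2 = 2 by norm_num]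
    exact (memLp_two_iff_integrable_sq hg).2 hg2
  have h := integral_mul_norm_le_Lp_mul_Lq hpq hmf hmg
  have e1 : ∫ a, ‖f a‖ ^ (2:ℝ) ∂ν = ∫ a, f a ^ 2 ∂ν := by
    apply integral_congr_ae; filter_upwards with a
    rw [Real.norm_eq_abs, show ((2:ℝ)) = ((2:ℕ):ℝ) by norm_num, Real.rpow_natCast, sq_abs (f a)]
  have e2 : ∫ a, ‖g a‖ ^ (2:ℝ) ∂ν = ∫ a, g a ^ 2 ∂ν := by
    apply integral_congr_ae; filter_upwards with a
    rw [Real.norm_eq_abs, show ((2:ℝ)) = ((2:ℕ):ℝ) by norm_num, Real.rpow_natCast, sq_abs (g a)]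
  rw [e1, e2] at h
  calc |∫ a, f a * g a ∂ν| ≤ ∫ a, |f a * g a| ∂ν := by
        simpa [Real.norm_eq_abs, abs_mul] using
          norm_integral_le_integral_norm (f := fun a => f a * g a) (μ := ν)
    _ = ∫ a, ‖f a‖ * ‖g a‖ ∂ν := by
        apply integral_congr_ae; filter_upwards with a
        rw [abs_mul, Real.norm_eq_abs, Real.norm_eq_abs]
    _ ≤ (∫ a, f a ^ 2 ∂ν) ^ (1/(2:ℝ)) * (∫ a, g a ^ 2 ∂ν) ^ (1/(2:ℝ)) := h
    _ = Real.sqrt (∫ a, f a ^ 2 ∂ν) * Real.sqrt (∫ a, g a ^ 2 ∂ν) := by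
        rw [Real.sqrt_eq_rpow, Real.sqrt_eq_rpow]

section EntryBound

variable {Ω : Type*} [MeasurableSpace Ω] {p : ℕ} {μ : Measure Ω}
  {B : Ω → Matrix (Fin p) (Fin p) ℝ}

lemma entry_bound [IsProbabilityMeasure μ] (hmeas : Measurable B)
    (hint : ∀ m f g, Integrable (fun ω => tpow p m (B ω) f g) μ)
    (a b n : ℕ) (f g : Fin (a + b) → Fin p) :
    |((expTpow p μ B (a + b)) ^ n) f g| ≤
      Real.sqrt (((expTpow p μ B (a + a)) ^ n)
          (Fin.append (f ∘ Fin.castAdd b) (f ∘ Fin.castAdd b))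
          (Fin.append (g ∘ Fin.castAdd b) (g ∘ Fin.castAdd b))) *
      Real.sqrt (((expTpow p μ B (b + b)) ^ n)
          (Fin.append (f ∘ Fin.natAdd a) (f ∘ Fin.natAdd a))
          (Fin.append (g ∘ Fin.natAdd a) (g ∘ Fin.natAdd a))) := by
  rw [pow_expTpow_entry hmeas hint n, pow_expTpow_entry hmeas hint n,
    pow_expTpow_entry hmeas hint n]
  set X : PSpace Ω n → ℝ :=
    fun t => tpow p a (CProd B n t) (f ∘ Fin.castAdd b) (g ∘ Fin.castAdd b) with hX
  set Y : PSpace Ω n → ℝ :=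
    fun t => tpow p b (CProd B n t) (f ∘ Fin.natAdd a) (g ∘ Fin.natAdd a) with hY
  have e0 : (fun t => tpow p (a + b) (CProd B n t) f g) = fun t => X t * Y t := by
    funext t; exact tpow_split p a b (CProd B n t) f g
  have e1 : (fun t => tpow p (a + a) (CProd B n t)
      (Fin.append (f ∘ Fin.castAdd b) (f ∘ Fin.castAdd b))
      (Fin.append (g ∘ Fin.castAdd b) (g ∘ Fin.castAdd b))) = fun t => X t ^ 2 := by
    funext t; exact (tpow_sq p a (CProd B n t) _ _).symm
  have e2 : (fun t => tpow p (b + b) (CProd B n t)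
      (Fin.append (f ∘ Fin.natAdd a) (f ∘ Fin.natAdd a))
      (Fin.append (g ∘ Fin.natAdd a) (g ∘ Fin.natAdd a))) = fun t => Y t ^ 2 := by
    funext t; exact (tpow_sq p b (CProd B n t) _ _).symm
  rw [show (∫ t, tpow p (a+b) (CProd B n t) f g ∂(PMeas μ n))
      = ∫ t, X t * Y t ∂(PMeas μ n) from congrArg _ e0,
    show (∫ t, tpow p (a+a) (CProd B n t) _ _ ∂(PMeas μ n))
      = ∫ t, X t ^ 2 ∂(PMeas μ n) from congrArg _ e1,
    show (∫ t, tpow p (b+b) (CProd B n t) _ _ ∂(PMeas μ n))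
      = ∫ t, Y t ^ 2 ∂(PMeas μ n) from congrArg _ e2]
  exact abs_integral_mul_le (PMeas μ n) X Y
    (measurable_tpow_CProd hmeas n a _ _).aestronglyMeasurable
    (measurable_tpow_CProd hmeas n b _ _).aestronglyMeasurable
    (e1 ▸ integrable_tpow_CProd hmeas hint n (a+a) _ _)
    (e2 ▸ integrable_tpow_CProd hmeas hint n (b+b) _ _)
    (e0 ▸ integrable_tpow_CProd hmeas hint n (a+b) f g)

end EntryBound

section Analysis

attribute [local instance] Matrix.linftyOpSeminormedAddCommGroup
  Matrix.linftyOpNormedAddCommGroup Matrix.linftyOpNormedRing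
  Matrix.linftyOpNormedAlgebra Matrix.linftyOpNormedSpace

variable {ι ι₂ ι₃ : Type*} [Fintype ι] [DecidableEq ι] [Fintype ι₂] [DecidableEq ι₂]
  [Fintype ι₃] [DecidableEq ι₃]

lemma entry_nnnorm_le {α : Type*} [SeminormedAddCommGroup α] (A : Matrix ι ι₂ α) (i : ι)
    (j : ι₂) : ‖A i j‖₊ ≤ ‖A‖₊ := by
  rw [Matrix.linfty_opNNNorm_def]
  exact le_trans
    (Finset.single_le_sum (f := fun j => ‖A i j‖₊) (fun _ _ => zero_le) (Finset.mem_univ j))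
    (Finset.le_sup (f := fun i => ∑ j, ‖A i j‖₊) (Finset.mem_univ i))

lemma nnnorm_le_card_mul (A : Matrix ι ι ℝ) (c : ℝ≥0) (h : ∀ i j, ‖A i j‖₊ ≤ c) :
    ‖A‖₊ ≤ (Fintype.card ι : ℝ≥0) * c := by
  rw [Matrix.linfty_opNNNorm_def]
  apply Finset.sup_le
  intro i _
  calc ∑ j, ‖A i j‖₊ ≤ ∑ _j : ι, c := Finset.sum_le_sum fun j _ => h i j
    _ = (Fintype.card ι : ℝ≥0) * c := by simp [mul_comm]

lemma nnnorm_map_complex (A : Matrix ι ι₂ ℝ) : ‖A.map (algebraMap ℝ ℂ)‖₊ = ‖A‖₊ := by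
  rw [Matrix.linfty_opNNNorm_def, Matrix.linfty_opNNNorm_def]
  congr 1
  funext i
  congr 1
  funext j
  simp [Matrix.map_apply]

lemma map_complex_pow (A : Matrix ι ι ℝ) (n : ℕ) :
    (A.map (algebraMap ℝ ℂ)) ^ n = (A ^ n).map (algebraMap ℝ ℂ) := by
  have := map_pow ((algebraMap ℝ ℂ).mapMatrix (m := ι)) A n
  simpa [RingHom.mapMatrix_apply] using this.symm

lemma tendsto_const_rpow_one_div (K : ℝ≥0∞) (h0 : K ≠ 0) (ht : K ≠ ⊤) :
    Tendsto (fun n : ℕ => K ^ (1 / (n : ℝ))) atTop (nhds 1) := by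
  have hK : K = ENNReal.ofReal K.toReal := by rw [ENNReal.ofReal_toReal ht]
  have hpos : 0 < K.toReal := ENNReal.toReal_pos h0 ht
  have h1 : Tendsto (fun n : ℕ => (1 / (n : ℝ))) atTop (nhds 0) :=
    tendsto_one_div_atTop_nhds_zero_nat
  have h2 : Tendsto (fun n : ℕ => K.toReal ^ (1 / (n : ℝ))) atTop (nhds 1) := by
    have := (Real.continuousAt_const_rpow (b := 0) (ne_of_gt hpos)).tendsto.comp h1
    simpa [Real.rpow_zero, Function.comp_def] using this
  have h3 := (ENNReal.continuous_ofReal.tendsto _).comp h2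
  simp only [ENNReal.ofReal_one] at h3
  refine h3.congr fun n => ?_
  show ENNReal.ofReal (K.toReal ^ (1 / (n:ℝ))) = K ^ (1 / (n:ℝ))
  rw [← ENNReal.ofReal_rpow_of_pos hpos, ENNReal.ofReal_toReal ht]

lemma specRad_sq_le (M : Matrix ι ι ℝ) (P : Matrix ι₂ ι₂ ℝ) (Q : Matrix ι₃ ι₃ ℝ)
    (φ φ' : ι → ι₂) (ψ ψ' : ι → ι₃)
    (hb : ∀ n, ∀ i j, |(M ^ n) i j| ≤
      Real.sqrt ((P ^ n) (φ i) (φ' j)) * Real.sqrt ((Q ^ n) (ψ i) (ψ' j))) :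
    specRad M ^ 2 ≤ specRad P * specRad Q := by
  classical
  haveI : CompleteSpace (Matrix ι ι ℂ) :=
    (inferInstanceAs (CompleteSpace (ι → ι → ℂ)))
  haveI : CompleteSpace (Matrix ι₂ ι₂ ℂ) :=
    (inferInstanceAs (CompleteSpace (ι₂ → ι₂ → ℂ)))
  haveI : CompleteSpace (Matrix ι₃ ι₃ ℂ) :=
    (inferInstanceAs (CompleteSpace (ι₃ → ι₃ → ℂ)))
  set Mc := M.map (algebraMap ℝ ℂ)
  set Pc := P.map (algebraMap ℝ ℂ)
  set Qc := Q.map (algebraMap ℝ ℂ)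
  set ρM := spectralRadius ℂ Mc
  set ρP := spectralRadius ℂ Pc
  set ρQ := spectralRadius ℂ Qc
  -- finiteness
  have hfinP : ρP ≠ ⊤ := by
    refine ne_top_of_le_ne_top ?_ (spectrum.spectralRadius_le_pow_nnnorm_pow_one_div ℂ Pc 0)
    simp only [pow_one, zero_add, Nat.cast_zero]
    exact ENNReal.mul_ne_top (by simp [ENNReal.rpow_ne_top_of_nonneg])
      (by simp [ENNReal.rpow_ne_top_of_nonneg])
  have hfinQ : ρQ ≠ ⊤ := by
    refine ne_top_of_le_ne_top ?_ (spectrum.spectralRadius_le_pow_nnnorm_pow_one_div ℂ Qc 0)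
    simp only [pow_one, zero_add, Nat.cast_zero]
    exact ENNReal.mul_ne_top (by simp [ENNReal.rpow_ne_top_of_nonneg])
      (by simp [ENNReal.rpow_ne_top_of_nonneg])
  -- nnnorm bound on powers
  set K : ℝ≥0 := (Fintype.card ι : ℝ≥0) + 1 with hKdef
  have hKpos : (0 : ℝ≥0) < K := by positivity
  have hnorm : ∀ n : ℕ, ‖M ^ n‖₊ ≤ K * (NNReal.sqrt ‖P ^ n‖₊ * NNReal.sqrt ‖Q ^ n‖₊) := by
    intro n
    have hcard : (Fintype.card ι : ℝ≥0) ≤ K := by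
      rw [hKdef]; exact le_add_of_nonneg_right zero_le_one
    refine le_trans (nnnorm_le_card_mul (M ^ n) _ fun i j => ?_)
      (mul_le_mul_of_nonneg_right hcard zero_le)
    rw [← NNReal.coe_le_coe]
    push_cast
    calc ‖(M ^ n) i j‖ = |(M ^ n) i j| := Real.norm_eq_abs _
      _ ≤ Real.sqrt ((P ^ n) (φ i) (φ' j)) * Real.sqrt ((Q ^ n) (ψ i) (ψ' j)) := hb n i j
      _ ≤ Real.sqrt ‖P ^ n‖ * Real.sqrt ‖Q ^ n‖ := by
          apply mul_le_mul (Real.sqrt_le_sqrt ?_) (Real.sqrt_le_sqrt ?_)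
            (Real.sqrt_nonneg _) (Real.sqrt_nonneg _)
          · calc (P ^ n) (φ i) (φ' j) ≤ |(P ^ n) (φ i) (φ' j)| := le_abs_self _
              _ = ‖(P ^ n) (φ i) (φ' j)‖ := (Real.norm_eq_abs _).symm
              _ ≤ ‖P ^ n‖ := by exact_mod_cast entry_nnnorm_le (P ^ n) _ _
          · calc (Q ^ n) (ψ i) (ψ' j) ≤ |(Q ^ n) (ψ i) (ψ' j)| := le_abs_self _
              _ = ‖(Q ^ n) (ψ i) (ψ' j)‖ := (Real.norm_eq_abs _).symm
              _ ≤ ‖Q ^ n‖ := by exact_mod_cast entry_nnnorm_le (Q ^ n) _ _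
  -- ENNReal-level bound
  have hE : ∀ n : ℕ, (‖Mc ^ n‖₊ : ℝ≥0∞) ^ (1 / (n : ℝ)) ≤
      (K : ℝ≥0∞) ^ (1 / (n : ℝ)) *
      (((‖Pc ^ n‖₊ : ℝ≥0∞) ^ (1 / (n : ℝ))) ^ (1 / (2 : ℝ)) *
       ((‖Qc ^ n‖₊ : ℝ≥0∞) ^ (1 / (n : ℝ))) ^ (1 / (2 : ℝ))) := by
    intro n
    have hMn : ‖Mc ^ n‖₊ = ‖M ^ n‖₊ := by rw [map_complex_pow]; exact nnnorm_map_complex _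
    have hPn : ‖Pc ^ n‖₊ = ‖P ^ n‖₊ := by rw [map_complex_pow]; exact nnnorm_map_complex _
    have hQn : ‖Qc ^ n‖₊ = ‖Q ^ n‖₊ := by rw [map_complex_pow]; exact nnnorm_map_complex _
    rw [hMn, hPn, hQn]
    have h1 : (‖M ^ n‖₊ : ℝ≥0∞) ≤
        (K : ℝ≥0∞) * ((‖P ^ n‖₊ : ℝ≥0∞) ^ (1 / (2:ℝ)) * (‖Q ^ n‖₊ : ℝ≥0∞) ^ (1 / (2:ℝ))) := by
      have := hnorm n
      calc (‖M ^ n‖₊ : ℝ≥0∞)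
          ≤ ((K * (NNReal.sqrt ‖P ^ n‖₊ * NNReal.sqrt ‖Q ^ n‖₊) : ℝ≥0) : ℝ≥0∞) := by
            exact_mod_cast this
        _ = _ := by
            push_cast
            rw [NNReal.sqrt_eq_rpow, NNReal.sqrt_eq_rpow,
              ENNReal.coe_rpow_of_nonneg _ (by norm_num : (0:ℝ) ≤ 1/2),
              ENNReal.coe_rpow_of_nonneg _ (by norm_num : (0:ℝ) ≤ 1/2)]
    calc (‖M ^ n‖₊ : ℝ≥0∞) ^ (1 / (n : ℝ))
        ≤ ((K : ℝ≥0∞) * ((‖P ^ n‖₊ : ℝ≥0∞) ^ (1 / (2:ℝ)) *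
            (‖Q ^ n‖₊ : ℝ≥0∞) ^ (1 / (2:ℝ)))) ^ (1 / (n : ℝ)) :=
          ENNReal.rpow_le_rpow h1 (by positivity)
      _ = (K : ℝ≥0∞) ^ (1 / (n : ℝ)) *
            (((‖P ^ n‖₊ : ℝ≥0∞) ^ (1 / (n : ℝ))) ^ (1 / (2 : ℝ)) *
             ((‖Q ^ n‖₊ : ℝ≥0∞) ^ (1 / (n : ℝ))) ^ (1 / (2 : ℝ))) := by
          rw [ENNReal.mul_rpow_of_nonneg _ _ (by positivity : (0:ℝ) ≤ 1 / n),
            ENNReal.mul_rpow_of_nonneg _ _ (by positivity : (0:ℝ) ≤ 1 / n)]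
          rw [← ENNReal.rpow_mul, ← ENNReal.rpow_mul, ← ENNReal.rpow_mul, ← ENNReal.rpow_mul]
          rw [mul_comm (1 / (2:ℝ)) (1 / (n:ℝ))]
  -- limits
  have hGM := spectrum.pow_nnnorm_pow_one_div_tendsto_nhds_spectralRadius Mc
  have hGP := spectrum.pow_nnnorm_pow_one_div_tendsto_nhds_spectralRadius Pc
  have hGQ := spectrum.pow_nnnorm_pow_one_div_tendsto_nhds_spectralRadius Qc
  have hK1 : Tendsto (fun n : ℕ => ((K : ℝ≥0∞)) ^ (1 / (n : ℝ))) atTop (nhds 1) :=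
    tendsto_const_rpow_one_div _ (by exact_mod_cast hKpos.ne') ENNReal.coe_ne_top
  have hPhalf : Tendsto (fun n : ℕ => ((‖Pc ^ n‖₊ : ℝ≥0∞) ^ (1 / (n : ℝ))) ^ (1 / (2:ℝ)))
      atTop (nhds (ρP ^ (1 / (2:ℝ)))) :=
    (ENNReal.continuous_rpow_const.tendsto ρP).comp hGP
  have hQhalf : Tendsto (fun n : ℕ => ((‖Qc ^ n‖₊ : ℝ≥0∞) ^ (1 / (n : ℝ))) ^ (1 / (2:ℝ)))
      atTop (nhds (ρQ ^ (1 / (2:ℝ)))) :=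
    (ENNReal.continuous_rpow_const.tendsto ρQ).comp hGQ
  have hPfin : ρP ^ (1 / (2:ℝ)) ≠ ⊤ := ENNReal.rpow_ne_top_of_nonneg (by norm_num) hfinP
  have hQfin : ρQ ^ (1 / (2:ℝ)) ≠ ⊤ := ENNReal.rpow_ne_top_of_nonneg (by norm_num) hfinQ
  have hprod : Tendsto (fun n : ℕ =>
      (K : ℝ≥0∞) ^ (1 / (n : ℝ)) *
      (((‖Pc ^ n‖₊ : ℝ≥0∞) ^ (1 / (n : ℝ))) ^ (1 / (2 : ℝ)) *
       ((‖Qc ^ n‖₊ : ℝ≥0∞) ^ (1 / (n : ℝ))) ^ (1 / (2 : ℝ)))) atTop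
      (nhds (1 * (ρP ^ (1 / (2:ℝ)) * ρQ ^ (1 / (2:ℝ))))) := by
    apply ENNReal.Tendsto.mul hK1 (Or.inl one_ne_zero)
      (ENNReal.Tendsto.mul hPhalf (Or.inr hQfin) hQhalf (Or.inr hPfin))
    exact Or.inr ENNReal.one_ne_top
  have hle : ρM ≤ 1 * (ρP ^ (1 / (2:ℝ)) * ρQ ^ (1 / (2:ℝ))) :=
    le_of_tendsto_of_tendsto' hGM hprod hE
  rw [one_mul] at hle
  -- pass to toReal
  have hrhsfin : ρP ^ (1 / (2:ℝ)) * ρQ ^ (1 / (2:ℝ)) ≠ ⊤ := ENNReal.mul_ne_top hPfin hQfin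
  have htR : (ρM).toReal ≤ (ρP ^ (1 / (2:ℝ)) * ρQ ^ (1 / (2:ℝ))).toReal :=
    ENNReal.toReal_mono hrhsfin hle
  rw [ENNReal.toReal_mul, ← ENNReal.toReal_rpow, ← ENNReal.toReal_rpow] at htR
  have hsq : specRad M ^ 2 ≤ ((ρP.toReal) ^ (1 / (2:ℝ)) * (ρQ.toReal) ^ (1 / (2:ℝ))) ^ 2 := by
    apply pow_le_pow_left₀ (ENNReal.toReal_nonneg) htR
  refine le_trans hsq (le_of_eq ?_)
  rw [mul_pow, ← Real.rpow_natCast ((ρP.toReal) ^ (1 / (2:ℝ))) 2,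
    ← Real.rpow_natCast ((ρQ.toReal) ^ (1 / (2:ℝ))) 2,
    ← Real.rpow_mul ENNReal.toReal_nonneg, ← Real.rpow_mul ENNReal.toReal_nonneg]
  norm_num
  rfl

end Analysis


section Combine

variable {Ω : Type*} [MeasurableSpace Ω] {p : ℕ} {μ : Measure Ω}
  {B : Ω → Matrix (Fin p) (Fin p) ℝ}

lemma specRad_convex [IsProbabilityMeasure μ] (hmeas : Measurable B)
    (hint : ∀ m f g, Integrable (fun ω => tpow p m (B ω) f g) μ) (a b : ℕ) :
    specRad (expTpow p μ B (a + b)) ^ 2 ≤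
      specRad (expTpow p μ B (a + a)) * specRad (expTpow p μ B (b + b)) := by
  apply specRad_sq_le (expTpow p μ B (a + b)) (expTpow p μ B (a + a)) (expTpow p μ B (b + b))
    (fun f => Fin.append (f ∘ Fin.castAdd b) (f ∘ Fin.castAdd b))
    (fun f => Fin.append (f ∘ Fin.castAdd b) (f ∘ Fin.castAdd b))
    (fun f => Fin.append (f ∘ Fin.natAdd a) (f ∘ Fin.natAdd a))
    (fun f => Fin.append (f ∘ Fin.natAdd a) (f ∘ Fin.natAdd a))
  intro n f g
  exact entry_bound hmeas hint a b n f g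

lemma specRad_expTpow_zero [IsProbabilityMeasure μ] :
    specRad (expTpow p μ B 0) = 1 := by
  have h1 : expTpow p μ B 0 = 1 := by
    ext f g
    have hfg : f = g := Subsingleton.elim f g
    subst hfg
    show (∫ ω, tpow p 0 (B ω) f f ∂μ) = (1 : Matrix _ _ ℝ) f f
    rw [Matrix.one_apply_eq]
    have : ∀ ω, tpow p 0 (B ω) f f = 1 := by
      intro ω; simp [tpow]
    simp only [this]
    simp [integral_const, measure_univ]
  rw [h1]
  unfold specRad
  have h2 : (1 : Matrix (Fin 0 → Fin p) (Fin 0 → Fin p) ℝ).map (algebraMap ℝ ℂ) = 1 := by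
    exact Matrix.map_one _ (map_zero _) (map_one _)
  rw [h2]
  haveI : Nontrivial (Matrix (Fin 0 → Fin p) (Fin 0 → Fin p) ℂ) := by
    refine ⟨0, 1, fun h => ?_⟩
    have := congrFun (congrFun h default) default
    simp [Matrix.one_apply_eq] at this
  rw [spectralRadius, spectrum.one_eq]
  simp

end Combine

/-- `k ↦ η_{2k}` is mid-point convex, and consequently `η_{2k}/(2k)` is
non-decreasing in `k ≥ 1`. -/
theorem stmt16 (p : ℕ) {Ω : Type*} [MeasurableSpace Ω]
    (μ : Measure Ω) [IsProbabilityMeasure μ]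
    (B : Ω → Matrix (Fin p) (Fin p) ℝ)
    (hmeas : Measurable B)
    (hint : ∀ m f g, Integrable (fun ω => tpow p m (B ω) f g) μ)
    (hpos : ∀ k, 0 < specRad (expTpow p μ B (2 * k))) :
    (∀ k, 1 ≤ k → eta p μ B k ≤ (eta p μ B (k - 1) + eta p μ B (k + 1)) / 2) ∧
    (∀ k, 1 ≤ k →
      eta p μ B k / (2 * (k : ℝ)) ≤ eta p μ B (k + 1) / (2 * ((k : ℝ) + 1))) := by
  set h : ℕ → ℝ := eta p μ B with hh
  have hconv : ∀ k, 1 ≤ k → h k ≤ (h (k - 1) + h (k + 1)) / 2 := by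
    intro k hk
    have e1 : (k - 1) + (k + 1) = 2 * k := by omega
    have e2 : (k - 1) + (k - 1) = 2 * (k - 1) := by omega
    have e3 : (k + 1) + (k + 1) = 2 * (k + 1) := by omega
    have key := specRad_convex hmeas hint (k - 1) (k + 1)
    rw [congrArg (fun m => specRad (expTpow p μ B m)) e1,
      congrArg (fun m => specRad (expTpow p μ B m)) e2,
      congrArg (fun m => specRad (expTpow p μ B m)) e3] at key
    have p1 := hpos k
    have p2 := hpos (k - 1)
    have p3 := hpos (k + 1)
    have hlog := Real.log_le_log (by positivity) key
    rw [Real.log_pow, Real.log_mul (ne_of_gt p2) (ne_of_gt p3)] at hlog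
    show Real.log (specRad (expTpow p μ B (2 * k))) ≤ _
    push_cast at hlog
    have : h (k-1) = Real.log (specRad (expTpow p μ B (2 * (k-1)))) := rfl
    have : h (k+1) = Real.log (specRad (expTpow p μ B (2 * (k+1)))) := rfl
    show Real.log (specRad (expTpow p μ B (2 * k))) ≤
      (Real.log (specRad (expTpow p μ B (2 * (k-1))))
        + Real.log (specRad (expTpow p μ B (2 * (k+1))))) / 2
    linarith
  refine ⟨hconv, ?_⟩
  have h0 : h 0 = 0 := by
    show Real.log (specRad (expTpow p μ B (2 * 0))) = 0
    rw [show 2 * 0 = 0 from rfl, specRad_expTpow_zero, Real.log_one]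
  have claim : ∀ k : ℕ, ((k : ℝ) + 1) * h k ≤ (k : ℝ) * h (k + 1) := by
    intro k
    induction k with
    | zero => rw [h0]; simp
    | succ k ih =>
      have hc := hconv (k + 1) (by omega)
      rw [show (k + 1) - 1 = k from rfl] at hc
      have hge : 2 * h (k + 1) - h (k + 2) ≤ h k := by linarith
      have h3 : ((k : ℝ) + 1) * (2 * h (k + 1) - h (k + 2)) ≤ ((k : ℝ) + 1) * h k :=
        mul_le_mul_of_nonneg_left hge (by positivity)
      push_cast
      nlinarith [ih, h3]
  intro k hk
  have hk1 : (1 : ℝ) ≤ (k : ℝ) := by exact_mod_cast hk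
  rw [div_le_div_iff₀ (by linarith) (by linarith)]
  nlinarith [claim k]
end
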